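/- For x, y > 0, if |F_x| ≤ x and |F_y| ≤ y then g(x,y;F_x,F_y) ≥ 0; moreover g is nonincreasing in |F_x| and |F_y| on this box: if |F_x| ≤ |F_x'| ≤ x and |F_y| ≤ |F_y'| ≤ y then g(x,y;F_x',F_y') ≤ g(x,y;F_x,F_y). Consequently, for λ₁, λ₂, λ₃ > 0 with λ₁ + λ₂ + λ₃ = 1 and |F_i| ≤ λ_i, the function σ₁ is nondecreasing in each of |F₁|, |F₂|, |F₃|. -/
import Mathlib


noncomputable section

/-- `q(x,y;F_x,F_y) = (x − F_x²/x)(y − F_y²/y)`. -/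
def qfun (x y Fx Fy : ℝ) : ℝ := (x - Fx ^ 2 / x) * (y - Fy ^ 2 / y)

/-- `r(x,y;F_x,F_y) = −(1 − F_x²/x − F_y²/y)`. -/
def rfun (x y Fx Fy : ℝ) : ℝ := -(1 - Fx ^ 2 / x - Fy ^ 2 / y)

/-- `g(x,y;F_x,F_y) = 2 q (x + y − 1 − r) / (3(x+y)²)`. -/
def gfun (x y Fx Fy : ℝ) : ℝ :=
  2 * qfun x y Fx Fy * (x + y - 1 - rfun x y Fx Fy) / (3 * (x + y) ^ 2)

/-- `σ₁ = λ₁ − g(λ₁,λ₂;F₁,F₂) − g(λ₁,λ₃;F₁,F₃)`. -/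
def sig1 (l1 l2 l3 F1 F2 F3 : ℝ) : ℝ := l1 - gfun l1 l2 F1 F2 - gfun l1 l3 F1 F3

/-- `σ₂ = λ₂ − g(λ₂,λ₁;F₂,F₁) − g(λ₂,λ₃;F₂,F₃)`. -/
def sig2 (l1 l2 l3 F1 F2 F3 : ℝ) : ℝ := l2 - gfun l2 l1 F2 F1 - gfun l2 l3 F2 F3

/-- `σ₃ = λ₃ − g(λ₃,λ₁;F₃,F₁) − g(λ₃,λ₂;F₃,F₂)`. -/
def sig3 (l1 l2 l3 F1 F2 F3 : ℝ) : ℝ := l3 - gfun l3 l1 F3 F1 - gfun l3 l2 F3 F2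

/-- `w₁ = σ₁ + 2g(λ₂,λ₃;F₂,F₃)`. -/
def w1 (l1 l2 l3 F1 F2 F3 : ℝ) : ℝ := sig1 l1 l2 l3 F1 F2 F3 + 2 * gfun l2 l3 F2 F3

/-- `w₂ = σ₂ + 2g(λ₁,λ₃;F₁,F₃)`. -/
def w2 (l1 l2 l3 F1 F2 F3 : ℝ) : ℝ := sig2 l1 l2 l3 F1 F2 F3 + 2 * gfun l1 l3 F1 F3

/-- `w₃ = σ₃ + 2g(λ₁,λ₂;F₁,F₂)`. -/
def w3 (l1 l2 l3 F1 F2 F3 : ℝ) : ℝ := sig3 l1 l2 l3 F1 F2 F3 + 2 * gfun l1 l2 F1 F2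

/-- On the box `|F_x| ≤ x`, `|F_y| ≤ y` (with `x, y > 0`) the function `g` is
nonnegative and nonincreasing in `|F_x|` and `|F_y|`; consequently `σ₁` is
nondecreasing in each of `|F₁|, |F₂|, |F₃|` on the box `|F_i| ≤ λ_i`. -/
lemma gfun_eq (x y Fx Fy : ℝ) :
    gfun x y Fx Fy =
      2 * ((x - Fx ^ 2 / x) * (y - Fy ^ 2 / y)) *
        ((x - Fx ^ 2 / x) + (y - Fy ^ 2 / y)) / (3 * (x + y) ^ 2) := by
  unfold gfun qfun rfun; ring_nf

lemma A_nonneg {x Fx : ℝ} (hx : 0 < x) (h : |Fx| ≤ x) : 0 ≤ x - Fx ^ 2 / x := by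
  have h2 : Fx ^ 2 ≤ x ^ 2 := by
    have := sq_abs Fx ▸ pow_le_pow_left₀ (abs_nonneg Fx) h 2
    simpa [sq_abs] using this
  have : Fx ^ 2 / x ≤ x := by
    rw [div_le_iff₀ hx]; nlinarith
  linarith

lemma A_anti {x Fx Fx' : ℝ} (hx : 0 < x) (h : |Fx| ≤ |Fx'|) :
    x - Fx' ^ 2 / x ≤ x - Fx ^ 2 / x := by
  have h2 : Fx ^ 2 ≤ Fx' ^ 2 := by
    have := pow_le_pow_left₀ (abs_nonneg Fx) h 2
    simpa [sq_abs] using this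
  gcongr

lemma g_nonneg (x y Fx Fy : ℝ) (hx : 0 < x) (hy : 0 < y)
    (hFx : |Fx| ≤ x) (hFy : |Fy| ≤ y) : 0 ≤ gfun x y Fx Fy := by
  rw [gfun_eq]
  have hA := A_nonneg hx hFx
  have hB := A_nonneg hy hFy
  have hxy : (0:ℝ) < 3 * (x + y) ^ 2 := by positivity
  positivity

lemma g_anti (x y Fx Fx' Fy Fy' : ℝ) (hx : 0 < x) (hy : 0 < y)
    (h1 : |Fx| ≤ |Fx'|) (h2 : |Fx'| ≤ x) (h3 : |Fy| ≤ |Fy'|) (h4 : |Fy'| ≤ y) :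
    gfun x y Fx' Fy' ≤ gfun x y Fx Fy := by
  rw [gfun_eq, gfun_eq]
  set A := x - Fx ^ 2 / x with hA
  set B := y - Fy ^ 2 / y with hB
  set A' := x - Fx' ^ 2 / x with hA'
  set B' := y - Fy' ^ 2 / y with hB'
  have hA'0 : 0 ≤ A' := A_nonneg hx h2
  have hB'0 : 0 ≤ B' := A_nonneg hy h4
  have hAA : A' ≤ A := A_anti hx h1
  have hBB : B' ≤ B := A_anti hy h3
  have hxy : (0:ℝ) < 3 * (x + y) ^ 2 := by positivity
  have hA0 : 0 ≤ A := hA'0.trans hAA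
  have hB0 : 0 ≤ B := hB'0.trans hBB
  have hnum : 2 * (A' * B') * (A' + B') ≤ 2 * (A * B) * (A + B) := by
    have hp : A' * B' ≤ A * B := mul_le_mul hAA hBB hB'0 hA0
    have hs : A' + B' ≤ A + B := add_le_add hAA hBB
    have := mul_le_mul hp hs (by linarith) (mul_nonneg hA0 hB0)
    nlinarith [this]
  exact (div_le_div_iff_of_pos_right hxy).mpr hnum

theorem gfun_nonneg_antitone_and_sig1_monotone :
    (∀ x y Fx Fy : ℝ, 0 < x → 0 < y → |Fx| ≤ x → |Fy| ≤ y → 0 ≤ gfun x y Fx Fy) ∧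
    (∀ x y Fx Fx' Fy Fy' : ℝ, 0 < x → 0 < y →
      |Fx| ≤ |Fx'| → |Fx'| ≤ x → |Fy| ≤ |Fy'| → |Fy'| ≤ y →
      gfun x y Fx' Fy' ≤ gfun x y Fx Fy) ∧
    (∀ l1 l2 l3 F1 F2 F3 F1' F2' F3' : ℝ,
      0 < l1 → 0 < l2 → 0 < l3 → l1 + l2 + l3 = 1 →
      |F1| ≤ |F1'| → |F1'| ≤ l1 → |F2| ≤ |F2'| → |F2'| ≤ l2 → |F3| ≤ |F3'| → |F3'| ≤ l3 →
      sig1 l1 l2 l3 F1 F2 F3 ≤ sig1 l1 l2 l3 F1' F2' F3') := by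
  refine ⟨g_nonneg, g_anti, ?_⟩
  intro l1 l2 l3 F1 F2 F3 F1' F2' F3' h1 h2 h3 _ a1 b1 a2 b2 a3 b3
  unfold sig1
  have g12 := g_anti l1 l2 F1 F1' F2 F2' h1 h2 a1 b1 a2 b2
  have g13 := g_anti l1 l3 F1 F1' F3 F3' h1 h3 a1 b1 a3 b3
  linarith



end
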